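/- For any weakly lex Pos-enriched category C, the exact completion C_ex is an exact Pos-enriched category: it has all finite weighted limits, (so, ff) factorizations stable under pullback, and every congruence in it is effective. -/

import Mathlib

open CategoryTheory

universe w v u v' u' v'' u''

/-- A `Pos`-enriched category: each hom-set carries a partial order and
composition is monotone in both variables. -/
class PosEnriched (C : Type u) [Category.{v} C] where
  homOrder : ∀ X Y : C, PartialOrder (X ⟶ Y)
  comp_mono : ∀ {X Y Z : C} {f f' : X ⟶ Y} {g g' : Y ⟶ Z},
    (homOrder X Y).le f f' → (homOrder Y Z).le g g' → (homOrder X Z).le (f ≫ g) (f' ≫ g')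

attribute [instance] PosEnriched.homOrder

namespace PosEnr

variable {C : Type u} [Category.{v} C] [PosEnriched C]

theorem comp_mono' {X Y Z : C} {f f' : X ⟶ Y} {g g' : Y ⟶ Z} (h : f ≤ f') (h' : g ≤ g') :
    f ≫ g ≤ f' ≫ g' := PosEnriched.comp_mono h h'

/-- `m` is an order-monomorphism (ff-morphism): postcomposition reflects the order
(hence, by antisymmetry, is also injective). -/
def OrderMono {X Y : C} (m : X ⟶ Y) : Prop :=
  ∀ {Z : C} (u v : Z ⟶ X), u ≫ m ≤ v ≫ m → u ≤ v

/-- `e` is an so-morphism: it is left orthogonal, in the `Pos`-enriched sense, to all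
order-monomorphisms (the relevant square of hom-posets is a pullback in `Pos`). -/
def IsSo {A B : C} (e : A ⟶ B) : Prop :=
  ∀ {X Y : C} (m : X ⟶ Y), OrderMono m →
    (∀ (f : A ⟶ X) (g : B ⟶ Y), f ≫ m = e ≫ g → ∃ h : B ⟶ X, e ≫ h = f ∧ h ≫ m = g) ∧
    (∀ h h' : B ⟶ X, e ≫ h ≤ e ≫ h' → h ≫ m ≤ h' ≫ m → h ≤ h')

/-- `e : I ⟶ X` is the (conical, `Pos`-enriched) inserter of the ordered pair `(f, g)`. -/
def IsInserterP {X Y I : C} (f g : X ⟶ Y) (e : I ⟶ X) : Prop :=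
  e ≫ f ≤ e ≫ g ∧
  (∀ {Z : C} (h : Z ⟶ X), h ≫ f ≤ h ≫ g → ∃ u : Z ⟶ I, u ≫ e = h) ∧
  OrderMono e

/-- A weak inserter: only the existence part of the universal property. -/
def IsWeakInserter {X Y I : C} (f g : X ⟶ Y) (e : I ⟶ X) : Prop :=
  e ≫ f ≤ e ≫ g ∧
  (∀ {Z : C} (h : Z ⟶ X), h ≫ f ≤ h ≫ g → ∃ u : Z ⟶ I, u ≫ e = h)

/-- `q : Y ⟶ Q` is the coinserter of the ordered pair `(u, v)`. -/
def IsCoinserterP {X Y Q : C} (u v : X ⟶ Y) (q : Y ⟶ Q) : Prop :=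
  u ≫ q ≤ v ≫ q ∧
  (∀ {Z : C} (h : Y ⟶ Z), u ≫ h ≤ v ≫ h → ∃ t : Q ⟶ Z, q ≫ t = h) ∧
  (∀ {Z : C} (h h' : Q ⟶ Z), q ≫ h ≤ q ≫ h' → h ≤ h')

/-- `(c0, c1)` is the comma object (lax pullback) of the ordered pair `(f, g)`. -/
def IsCommaP {X Y Z P : C} (f : X ⟶ Z) (g : Y ⟶ Z) (c0 : P ⟶ X) (c1 : P ⟶ Y) : Prop :=
  c0 ≫ f ≤ c1 ≫ g ∧
  (∀ {A : C} (u0 : A ⟶ X) (u1 : A ⟶ Y), u0 ≫ f ≤ u1 ≫ g →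
      ∃ w : A ⟶ P, w ≫ c0 = u0 ∧ w ≫ c1 = u1) ∧
  (∀ {A : C} (w w' : A ⟶ P), w ≫ c0 ≤ w' ≫ c0 → w ≫ c1 ≤ w' ≫ c1 → w ≤ w')

/-- An effective epimorphism: a coinserter of some pair. -/
def EffectiveEpiP {Y Q : C} (q : Y ⟶ Q) : Prop :=
  ∃ (X : C) (u v : X ⟶ Y), IsCoinserterP u v q

/-- Binary product in the `Pos`-enriched (conical) sense. -/
def IsBinProdP {X Y P : C} (p : P ⟶ X) (q : P ⟶ Y) : Prop :=
  (∀ {Z : C} (f : Z ⟶ X) (g : Z ⟶ Y), ∃ h : Z ⟶ P, h ≫ p = f ∧ h ≫ q = g) ∧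
  (∀ {Z : C} (h h' : Z ⟶ P), h ≫ p ≤ h' ≫ p → h ≫ q ≤ h' ≫ q → h ≤ h')

/-- Terminal object in the `Pos`-enriched sense. -/
def IsTerminalP (T : C) : Prop :=
  ∀ X : C, ∃ f : X ⟶ T, ∀ g : X ⟶ T, g = f

/-- Product of a (possibly infinite) family in the `Pos`-enriched sense. -/
def IsProdFamP {ι : Type w} (X : ι → C) (P : C) (p : ∀ i, P ⟶ X i) : Prop :=
  (∀ {Z : C} (f : ∀ i, Z ⟶ X i), ∃ h : Z ⟶ P, ∀ i, h ≫ p i = f i) ∧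
  (∀ {Z : C} (h h' : Z ⟶ P), (∀ i, h ≫ p i ≤ h' ≫ p i) → h ≤ h')

/-- Weak product of a family: only the existence part. -/
def IsWeakProdFam {ι : Type w} (X : ι → C) (P : C) (p : ∀ i, P ⟶ X i) : Prop :=
  ∀ {Z : C} (f : ∀ i, Z ⟶ X i), ∃ h : Z ⟶ P, ∀ i, h ≫ p i = f i

/-- Pullback in the `Pos`-enriched (conical) sense. -/
def IsPullbackP {X Y Z P : C} (f : X ⟶ Z) (g : Y ⟶ Z) (p0 : P ⟶ X) (p1 : P ⟶ Y) : Prop :=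
  p0 ≫ f = p1 ≫ g ∧
  (∀ {A : C} (u0 : A ⟶ X) (u1 : A ⟶ Y), u0 ≫ f = u1 ≫ g →
      ∃ w : A ⟶ P, w ≫ p0 = u0 ∧ w ≫ p1 = u1) ∧
  (∀ {A : C} (w w' : A ⟶ P), w ≫ p0 ≤ w' ≫ p0 → w ≫ p1 ≤ w' ≫ p1 → w ≤ w')

/-- A congruence, given by a jointly order-monic pair which is order-reflexive and
transitive (in terms of generalized elements). -/
def IsCongPair {S X : C} (s0 s1 : S ⟶ X) : Prop :=
  (∀ {A : C} (u v : A ⟶ S), u ≫ s0 ≤ v ≫ s0 → u ≫ s1 ≤ v ≫ s1 → u ≤ v) ∧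
  (∀ {A : C} (a0 a1 : A ⟶ X), a0 ≤ a1 → ∃ u : A ⟶ S, u ≫ s0 = a0 ∧ u ≫ s1 = a1) ∧
  (∀ {A : C} (u v : A ⟶ S), u ≫ s1 = v ≫ s0 →
      ∃ t : A ⟶ S, t ≫ s0 = u ≫ s0 ∧ t ≫ s1 = v ≫ s1)

/-- An so-projective object: its covariant hom-functor to `Pos` preserves so-morphisms
(equivalently, sends them to surjections). -/
def SoProjective (P : C) : Prop :=
  ∀ {A B : C} (e : A ⟶ B), IsSo e → ∀ f : P ⟶ B, ∃ g : P ⟶ A, g ≫ e = f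

end PosEnr

/-- A weight `W : D ⥤ Pos` for `Pos`-enriched weighted limits, given concretely. -/
structure PosWeight (D : Type u') [Category.{v'} D] [PosEnriched D] where
  obj : D → Type
  po : ∀ d, PartialOrder (obj d)
  map : ∀ {d d' : D}, (d ⟶ d') → obj d → obj d'
  map_monotone : ∀ {d d' : D} (f : d ⟶ d') (x y : obj d),
    (po d).le x y → (po d').le (map f x) (map f y)
  map_id : ∀ (d : D) (x : obj d), map (𝟙 d) x = x
  map_comp : ∀ {d d' d'' : D} (f : d ⟶ d') (g : d' ⟶ d'') (x : obj d),
    map (f ≫ g) x = map g (map f x)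
  map_le : ∀ {d d' : D} {f g : d ⟶ d'}, f ≤ g → ∀ x : obj d, (po d').le (map f x) (map g x)

attribute [instance] PosWeight.po

/-- A finite weight: finitely many objects, finite hom-posets, finite values. -/
def PosWeight.IsFiniteWeight {D : Type u'} [Category.{v'} D] [PosEnriched D]
    (W : PosWeight D) : Prop :=
  Finite D ∧ (∀ d d' : D, Finite (d ⟶ d')) ∧ ∀ d, Finite (W.obj d)

/-- A `Pos`-enriched (locally monotone) functor. -/
structure PosFunctor (C : Type u) (E : Type u') [Category.{v} C] [Category.{v'} E]
    [PosEnriched C] [PosEnriched E] where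
  toFunctor : C ⥤ E
  map_le : ∀ {X Y : C} {f g : X ⟶ Y}, f ≤ g → toFunctor.map f ≤ toFunctor.map g

/-- Composition of `Pos`-enriched functors. -/
def PosFunctor.comp {D : Type u''} {C : Type u} {E : Type u'}
    [Category.{v''} D] [Category.{v} C] [Category.{v'} E]
    [PosEnriched D] [PosEnriched C] [PosEnriched E]
    (G : PosFunctor D C) (F : PosFunctor C E) : PosFunctor D E where
  toFunctor := G.toFunctor ⋙ F.toFunctor
  map_le h := F.map_le (G.map_le h)

/-- A cylinder (`Pos`-natural transformation) `W ⟶ C(L, F-)`. -/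
structure Cylinder {D : Type u'} [Category.{v'} D] [PosEnriched D] (W : PosWeight D)
    {E : Type u} [Category.{v} E] [PosEnriched E] (F : PosFunctor D E) (L : E) where
  app : ∀ d : D, W.obj d → (L ⟶ F.toFunctor.obj d)
  monotone : ∀ (d : D) (x y : W.obj d), (W.po d).le x y → app d x ≤ app d y
  naturality : ∀ {d d' : D} (f : d ⟶ d') (x : W.obj d),
    app d x ≫ F.toFunctor.map f = app d' (W.map f x)

/-- The image of a cylinder under a `Pos`-enriched functor. -/
def Cylinder.mapF {D : Type u''} {C : Type u} {E : Type u'}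
    [Category.{v''} D] [Category.{v} C] [Category.{v'} E]
    [PosEnriched D] [PosEnriched C] [PosEnriched E]
    {W : PosWeight D} {G : PosFunctor D C} {L : C}
    (F : PosFunctor C E) (c : Cylinder W G L) :
    Cylinder W (G.comp F) (F.toFunctor.obj L) where
  app d x := F.toFunctor.map (c.app d x)
  monotone d x y h := F.map_le (c.monotone d x y h)
  naturality f x := by
    show F.toFunctor.map _ ≫ F.toFunctor.map _ = _
    rw [← F.toFunctor.map_comp, c.naturality]

/-- `L` with cylinder `c` is a weak `W`-weighted limit of `F`:
the induced comparison maps on hom-posets are surjective. -/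
def IsWeakWeightedLimitP {D : Type u'} [Category.{v'} D] [PosEnriched D] (W : PosWeight D)
    {E : Type u} [Category.{v} E] [PosEnriched E] (F : PosFunctor D E)
    (L : E) (c : Cylinder W F L) : Prop :=
  ∀ (Z : E) (φ : Cylinder W F Z), ∃ h : Z ⟶ L, ∀ (d : D) (x : W.obj d),
    h ≫ c.app d x = φ.app d x

/-- `L` with cylinder `c` is a (strong) `W`-weighted limit of `F`. -/
def IsWeightedLimitP {D : Type u'} [Category.{v'} D] [PosEnriched D] (W : PosWeight D)
    {E : Type u} [Category.{v} E] [PosEnriched E] (F : PosFunctor D E)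
    (L : E) (c : Cylinder W F L) : Prop :=
  IsWeakWeightedLimitP W F L c ∧
  ∀ (Z : E) (h h' : Z ⟶ L), (∀ (d : D) (x : W.obj d), h ≫ c.app d x ≤ h' ≫ c.app d x) → h ≤ h'

/-- A weakly lex `Pos`-category: all weak finite weighted limits exist. -/
def WeaklyLex (C : Type u) [Category.{v} C] [PosEnriched C] : Prop :=
  ∀ (D : Type) [SmallCategory D] [PosEnriched D] (W : PosWeight D) (F : PosFunctor D C),
    W.IsFiniteWeight → ∃ (L : C) (c : Cylinder W F L), IsWeakWeightedLimitP W F L c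

/-- All finite weighted limits exist (in the strong sense). -/
def HasFiniteWeightedLimitsP (C : Type u) [Category.{v} C] [PosEnriched C] : Prop :=
  ∀ (D : Type) [SmallCategory D] [PosEnriched D] (W : PosWeight D) (F : PosFunctor D C),
    W.IsFiniteWeight → ∃ (L : C) (c : Cylinder W F L), IsWeightedLimitP W F L c

open PosEnr

/-- A regular `Pos`-enriched category. -/
def IsRegularCat (C : Type u) [Category.{v} C] [PosEnriched C] : Prop :=
  HasFiniteWeightedLimitsP C ∧
  (∀ {X Y : C} (f : X ⟶ Y), ∃ (I : C) (e : X ⟶ I) (m : I ⟶ Y),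
      IsSo e ∧ OrderMono m ∧ e ≫ m = f) ∧
  (∀ {X Y Z P : C} (f : X ⟶ Z) (g : Y ⟶ Z) (p0 : P ⟶ X) (p1 : P ⟶ Y),
      IsPullbackP f g p0 p1 → IsSo f → IsSo p1)

/-- An exact `Pos`-enriched category: regular, and every congruence is effective,
i.e. is the kernel congruence (comma object `q/q`) of some morphism. -/
def IsExactCat (C : Type u) [Category.{v} C] [PosEnriched C] : Prop :=
  IsRegularCat C ∧
  ∀ {S X : C} (s0 s1 : S ⟶ X), IsCongPair s0 s1 →
    ∃ (Q : C) (q : X ⟶ Q), IsCommaP q q s0 s1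

/-- Fully order-faithful: full and order-reflecting (hence faithful) on hom-posets. -/
def FullyOrderFaithful {C : Type u} {E : Type u'} [Category.{v} C] [Category.{v'} E]
    [PosEnriched C] [PosEnriched E] (F : PosFunctor C E) : Prop :=
  (∀ {X Y : C} (g : F.toFunctor.obj X ⟶ F.toFunctor.obj Y), ∃ f : X ⟶ Y, F.toFunctor.map f = g) ∧
  (∀ {X Y : C} (f g : X ⟶ Y), F.toFunctor.map f ≤ F.toFunctor.map g → f ≤ g)

/-- An equivalence of `Pos`-enriched categories. -/
def IsEquivP {C : Type u} {E : Type u'} [Category.{v} C] [Category.{v'} E]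
    [PosEnriched C] [PosEnriched E] (F : PosFunctor C E) : Prop :=
  FullyOrderFaithful F ∧ ∀ Y : E, ∃ X : C, Nonempty (F.toFunctor.obj X ≅ Y)

/-- Preservation of all finite weighted limits by a `Pos`-enriched functor. -/
def PreservesFiniteWeightedLimitsP {C : Type u} {E : Type u'} [Category.{v} C] [Category.{v'} E]
    [PosEnriched C] [PosEnriched E] (F : PosFunctor C E) : Prop :=
  ∀ (D : Type) [SmallCategory D] [PosEnriched D] (W : PosWeight D), W.IsFiniteWeight →
    ∀ (G : PosFunctor D C) (L : C) (c : Cylinder W G L),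
      IsWeightedLimitP W G L c →
      IsWeightedLimitP W (G.comp F) (F.toFunctor.obj L) (c.mapF F)

/-- A regular `Pos`-enriched functor: preserves finite weighted limits and effective
epimorphisms. -/
def IsRegularFunctor {C : Type u} {E : Type u'} [Category.{v} C] [Category.{v'} E]
    [PosEnriched C] [PosEnriched E] (F : PosFunctor C E) : Prop :=
  PreservesFiniteWeightedLimitsP F ∧
  ∀ {X Y : C} (e : X ⟶ Y), EffectiveEpiP e → EffectiveEpiP (F.toFunctor.map e)

/-- A left covering functor: for every weak finite weighted limit in the domain, any
comparison morphism into the corresponding (strong) limit in the codomain is an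
effective epimorphism. -/
def LeftCovering {C : Type u} {E : Type u'} [Category.{v} C] [Category.{v'} E]
    [PosEnriched C] [PosEnriched E] (F : PosFunctor C E) : Prop :=
  ∀ (D : Type) [SmallCategory D] [PosEnriched D] (W : PosWeight D), W.IsFiniteWeight →
    ∀ (G : PosFunctor D C) (L : C) (c : Cylinder W G L), IsWeakWeightedLimitP W G L c →
    ∀ (L' : E) (c' : Cylinder W (G.comp F) L'), IsWeightedLimitP W (G.comp F) L' c' →
    ∀ h : F.toFunctor.obj L ⟶ L', (∀ (d : D) (x : W.obj d),
        h ≫ c'.app d x = F.toFunctor.map (c.app d x)) →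
      EffectiveEpiP h

/-- The full subcategory of a `Pos`-enriched category is `Pos`-enriched. -/
instance fullSubPosEnriched {C : Type u} [Category.{v} C] [PosEnriched C] (Z : C → Prop) :
    PosEnriched (ObjectProperty.FullSubcategory Z) where
  homOrder X Y := PartialOrder.lift (fun f : X ⟶ Y => f.hom)
    (fun _ _ h => ObjectProperty.hom_ext _ h)
  comp_mono h h' := PosEnriched.comp_mono h h'

/-! ## The exact completion -/

open PosEnr

/-- A pseudocongruence in a `Pos`-enriched category: an order-reflexive and transitive
parallel pair. These are the objects of the exact completion. -/
structure ExObj (C : Type u) [Category.{v} C] [PosEnriched C] where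
  X : C
  R : C
  r0 : R ⟶ X
  r1 : R ⟶ X
  orefl : ∀ {A : C} (a0 a1 : A ⟶ X), a0 ≤ a1 → ∃ u : A ⟶ R, u ≫ r0 = a0 ∧ u ≫ r1 = a1
  tra : ∀ {A : C} (u v : A ⟶ R), u ≫ r1 = v ≫ r0 →
    ∃ t : A ⟶ R, t ≫ r0 = u ≫ r0 ∧ t ≫ r1 = v ≫ r1

namespace ExObj

variable {C : Type u} [Category.{v} C] [PosEnriched C]

/-- `f : X ⟶ Y` is compatible from `(X,R)` to `(Y,S)`. -/
def Compat (A B : ExObj C) (f : A.X ⟶ B.X) : Prop :=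
  ∃ fb : A.R ⟶ B.R, fb ≫ B.r0 = A.r0 ≫ f ∧ fb ≫ B.r1 = A.r1 ≫ f

/-- The preorder `f ≼ g` on compatible morphisms, given by factoring `(f,g)` through
the codomain pseudocongruence. -/
def Pre (A B : ExObj C) (f g : A.X ⟶ B.X) : Prop :=
  ∃ s : A.X ⟶ B.R, s ≫ B.r0 = f ∧ s ≫ B.r1 = g

theorem Pre.refl (A B : ExObj C) (f : A.X ⟶ B.X) : Pre A B f f := by
  obtain ⟨u, h0, h1⟩ := B.orefl f f le_rfl
  exact ⟨u, h0, h1⟩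

theorem Pre.trans' {A B : ExObj C} {f g h : A.X ⟶ B.X}
    (h1 : Pre A B f g) (h2 : Pre A B g h) : Pre A B f h := by
  obtain ⟨s, hs0, hs1⟩ := h1
  obtain ⟨t, ht0, ht1⟩ := h2
  obtain ⟨w, hw0, hw1⟩ := B.tra s t (by rw [hs1, ht0])
  exact ⟨w, by rw [hw0, hs0], by rw [hw1, ht1]⟩

theorem Compat.comp {A B D : ExObj C} {f : A.X ⟶ B.X} {g : B.X ⟶ D.X}
    (hf : Compat A B f) (hg : Compat B D g) : Compat A D (f ≫ g) := by
  obtain ⟨fb, h0, h1⟩ := hf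
  obtain ⟨gb, k0, k1⟩ := hg
  refine ⟨fb ≫ gb, ?_, ?_⟩
  · rw [Category.assoc, k0, ← Category.assoc, h0, Category.assoc]
  · rw [Category.assoc, k1, ← Category.assoc, h1, Category.assoc]

theorem Pre.comp_left {A B D : ExObj C} {f f' : A.X ⟶ B.X} (g : B.X ⟶ D.X)
    (hg : Compat B D g) (h : Pre A B f f') : Pre A D (f ≫ g) (f' ≫ g) := by
  obtain ⟨s, hs0, hs1⟩ := h
  obtain ⟨gb, k0, k1⟩ := hg
  refine ⟨s ≫ gb, ?_, ?_⟩
  · rw [Category.assoc, k0, ← Category.assoc, hs0]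
  · rw [Category.assoc, k1, ← Category.assoc, hs1]

theorem Pre.comp_right {A B D : ExObj C} (f : A.X ⟶ B.X) {g g' : B.X ⟶ D.X}
    (h : Pre B D g g') : Pre A D (f ≫ g) (f ≫ g') := by
  obtain ⟨s, hs0, hs1⟩ := h
  exact ⟨f ≫ s, by rw [Category.assoc, hs0], by rw [Category.assoc, hs1]⟩

theorem Pre.compCongr {A B D : ExObj C} {f f' : A.X ⟶ B.X} {g g' : B.X ⟶ D.X}
    (hg : Compat B D g) (h1 : Pre A B f f') (h2 : Pre B D g g') :
    Pre A D (f ≫ g) (f' ≫ g') :=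
  (Pre.comp_left g hg h1).trans' (Pre.comp_right f' h2)

/-- The equivalence relation on compatible morphisms. -/
def exSetoid (A B : ExObj C) : Setoid {f : A.X ⟶ B.X // Compat A B f} where
  r f g := Pre A B f.1 g.1 ∧ Pre A B g.1 f.1
  iseqv := ⟨fun f => ⟨Pre.refl A B f.1, Pre.refl A B f.1⟩, fun h => ⟨h.2, h.1⟩,
    fun h1 h2 => ⟨h1.1.trans' h2.1, h2.2.trans' h1.2⟩⟩

/-- The exact completion `C_ex` as a category: objects are pseudocongruences, morphisms
are equivalence classes of compatible morphisms. -/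
instance exCategory : Category (ExObj C) where
  Hom A B := Quotient (exSetoid A B)
  id A := Quotient.mk _ ⟨𝟙 A.X, ⟨𝟙 A.R, by simp, by simp⟩⟩
  comp {A B D} f g :=
    Quotient.liftOn₂ f g (fun f g => Quotient.mk _ ⟨f.1 ≫ g.1, f.2.comp g.2⟩)
      (fun a b a' b' ha hb => Quotient.sound
        ⟨Pre.compCongr b.2 ha.1 hb.1, Pre.compCongr b'.2 ha.2 hb.2⟩)
  id_comp {A B} f := Quotient.inductionOn f fun f => Quotient.sound (by
    constructor <;> · simp only [Category.id_comp]; exact Pre.refl A B f.1)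
  comp_id {A B} f := Quotient.inductionOn f fun f => Quotient.sound (by
    constructor <;> · simp only [Category.comp_id]; exact Pre.refl A B f.1)
  assoc {A B D E} f g h := Quotient.inductionOn₃ f g h fun f g h => Quotient.sound (by
    constructor <;> · simp only [Category.assoc]; exact Pre.refl A E _)

/-- The `Pos`-enrichment of the exact completion. -/
instance exPosEnriched : PosEnriched (ExObj C) where
  homOrder A B :=
    { le := fun f g => Quotient.liftOn₂ f g (fun f g => Pre A B f.1 g.1)
        (fun a b a' b' ha hb => propext
          ⟨fun h => (ha.2.trans' h).trans' hb.1, fun h => (ha.1.trans' h).trans' hb.2⟩)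
      le_refl := fun f => Quotient.inductionOn f fun f => Pre.refl A B f.1
      le_trans := fun f g h => Quotient.inductionOn₃ f g h
        (fun f g h h1 h2 => Pre.trans' h1 h2)
      le_antisymm := fun f g => Quotient.inductionOn₂ f g
        (fun f g h1 h2 => Quotient.sound ⟨h1, h2⟩) }
  comp_mono {A B D} {f f'} {g g'} h h' := by
    revert h h'
    refine Quotient.inductionOn₂ f f' (fun a a' => Quotient.inductionOn₂ g g'
      (fun b b' h h' => ?_))
    exact Pre.compCongr b.2 h h'

end ExObj

/-! ## The canonical embedding `Γ : C → C_ex` -/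

namespace ExObj

variable {C : Type u} [Category.{v} C] [PosEnriched C]

variable (I : C → C) (i0 i1 : ∀ X : C, I X ⟶ X)

/-- The pseudocongruence `(X, I_X)` associated to a chosen weak comma object `I_X` of
`(1_X, 1_X)`. -/
def commaExObj (hle : ∀ X, i0 X ≤ i1 X)
    (hfac : ∀ (X : C) {A : C} (a0 a1 : A ⟶ X), a0 ≤ a1 →
      ∃ u : A ⟶ I X, u ≫ i0 X = a0 ∧ u ≫ i1 X = a1) (X : C) : ExObj C where
  X := X
  R := I X
  r0 := i0 X
  r1 := i1 X
  orefl a0 a1 h := hfac X a0 a1 h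
  tra u v huv := by
    refine hfac X _ _ ?_
    calc u ≫ i0 X ≤ u ≫ i1 X := PosEnriched.comp_mono le_rfl (hle X)
      _ = v ≫ i0 X := huv
      _ ≤ v ≫ i1 X := PosEnriched.comp_mono le_rfl (hle X)

/-- The canonical functor `Γ : C → C_ex`, `X ↦ (X, I_X)`, `f ↦ [f]`. -/
def GammaFunc (hle : ∀ X, i0 X ≤ i1 X)
    (hfac : ∀ (X : C) {A : C} (a0 a1 : A ⟶ X), a0 ≤ a1 →
      ∃ u : A ⟶ I X, u ≫ i0 X = a0 ∧ u ≫ i1 X = a1) : C ⥤ ExObj C where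
  obj X := commaExObj I i0 i1 hle hfac X
  map {X Y} f := Quotient.mk _ ⟨f, by
    obtain ⟨u, h0, h1⟩ := hfac Y (i0 X ≫ f) (i1 X ≫ f)
      (PosEnriched.comp_mono (hle X) le_rfl)
    exact ⟨u, h0, h1⟩⟩
  map_id X := Quotient.sound (by
    constructor <;> exact Pre.refl _ _ _)
  map_comp f g := Quotient.sound (by
    constructor <;> exact Pre.refl _ _ _)

/-- The canonical quotient morphism `[1_X] : Γ X → (X, R)` in `C_ex`. -/
def exQuot (hle : ∀ X, i0 X ≤ i1 X)
    (hfac : ∀ (X : C) {A : C} (a0 a1 : A ⟶ X), a0 ≤ a1 →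
      ∃ u : A ⟶ I X, u ≫ i0 X = a0 ∧ u ≫ i1 X = a1) (A : ExObj C) :
    (GammaFunc I i0 i1 hle hfac).obj A.X ⟶ A :=
  Quotient.mk _ ⟨𝟙 A.X, by
    obtain ⟨u, h0, h1⟩ := A.orefl (i0 A.X) (i1 A.X) (hle A.X)
    exact ⟨u, by simpa [GammaFunc, commaExObj] using h0, by simpa [GammaFunc, commaExObj] using h1⟩⟩

end ExObj

/-!
Every object `B` of `C_ex` is covered by `q B = [𝟙] : Γ B.X ⟶ B`, where `Γ Y` is `Y` with the
pseudocongruence generated by its order. The morphism `q B` is so, and a morphism `φ` into `B` is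
so exactly when `q B` factors through `φ`: for `φ = [f]` lift `𝟙 B` against the order-monic half
of the kernel factorization `A ⟶ (A.X, ker f) ⟶ B`. This description is stable under pullback.

Everything else comes from weak finite limits in `C`. A finite weighted limit is a weak limit of
representatives of the diagram, carrying the pseudocongruence induced by its projections. A
congruence `(s0, s1) : S ⇉ X` is the kernel of `[𝟙] : X ⟶ (X.X, ρ)`, where `ρ` relates `a0` and
`a1` when `S` relates `[a0]` and `[a1]` over `Γ Z`: `ρ` is a pseudocongruence because `S` is a
congruence, and it is weakly representable because it is the composite relation
`Rel X ; (σ0, σ1) ; Rel X`.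
-/

/-- A weak cotensor of `X` with the arrow `0 ≤ 1`. -/
structure ArrowObject {C : Type u} [Category.{v} C] [PosEnriched C] (X : C) where
  I : C
  i0 : I ⟶ X
  i1 : I ⟶ X
  le : i0 ≤ i1
  lift : ∀ {A : C} (a0 a1 : A ⟶ X), a0 ≤ a1 → ∃ u : A ⟶ I, u ≫ i0 = a0 ∧ u ≫ i1 = a1

section weights

open CategoryTheory.Limits

instance (ι : Type w) : PosEnriched (Discrete ι) where
  homOrder _ _ :=
    { le := fun _ _ => True
      le_refl := fun _ => trivial
      le_trans := fun _ _ _ _ _ => trivial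
      le_antisymm := fun _ _ _ _ => Subsingleton.elim _ _ }
  comp_mono _ _ := trivial

instance : PosEnriched WalkingParallelPair where
  homOrder _ _ :=
    { le := Eq
      le_refl := Eq.refl
      le_trans := fun _ _ _ => Eq.trans
      le_antisymm := fun _ _ h _ => h }
  comp_mono h h' := by
    change _ = _ at h h' ⊢
    rw [h, h']

def PosWeight.discrete (ι : Type) : PosWeight (Discrete ι) where
  obj _ := PUnit
  po _ := inferInstance
  map _ x := x
  map_monotone _ _ _ h := h
  map_id _ _ := rfl
  map_comp _ _ _ := rfl
  map_le _ _ := le_rfl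

/-- `W 0 = 1` and `W 1 = 2`, the two arrows `0 ⟶ 1` picking `false ≤ true`. -/
def PosWeight.inserter : PosWeight WalkingParallelPair where
  obj
    | .zero => PUnit
    | .one => Bool
  po
    | .zero => inferInstanceAs (PartialOrder PUnit)
    | .one => inferInstanceAs (PartialOrder Bool)
  map
    | .left => fun _ => false
    | .right => fun _ => true
    | .id _ => id
  map_monotone u x y h := by
    change WalkingParallelPairHom _ _ at u
    cases u <;> first | exact le_rfl | exact h
  map_id _ _ := rfl
  map_comp u v _ := by
    change WalkingParallelPairHom _ _ at u v
    cases u <;> cases v <;> rfl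
  map_le {_ d'} _ _ h _ := by cases h; cases d' <;> exact le_rfl

variable {C : Type u} [Category.{v} C] [PosEnriched C]

def PosFunctor.discrete {ι : Type} (A : ι → C) : PosFunctor (Discrete ι) C where
  toFunctor := Discrete.functor A
  map_le {_ _ f g} _ := by rw [Subsingleton.elim f g]

def PosFunctor.parallelPair {X Y : C} (f g : X ⟶ Y) : PosFunctor WalkingParallelPair C where
  toFunctor := CategoryTheory.Limits.parallelPair f g
  map_le h := by cases h; exact le_rfl

end weights

namespace WeaklyLex

open CategoryTheory.Limits

variable {C : Type u} [Category.{v} C] [PosEnriched C]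

theorem exists_weakProd (hC : WeaklyLex C) (ι : Type) [Finite ι] (A : ι → C) :
    ∃ (P : C) (p : ∀ i, P ⟶ A i), IsWeakProdFam A P p := by
  obtain ⟨L, c, hL⟩ := hC (Discrete ι) (.discrete ι) (.discrete A)
    ⟨Finite.of_equiv ι discreteEquiv.symm, fun _ _ => inferInstance,
      fun _ => inferInstanceAs (Finite PUnit)⟩
  refine ⟨L, fun i => c.app ⟨i⟩ .unit, fun {Z} f => ?_⟩
  obtain ⟨h, hh⟩ := hL Z
    { app := fun d _ => f d.as
      monotone := fun _ _ _ _ => le_rfl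
      naturality := by
        rintro ⟨d⟩ ⟨d'⟩ g x
        obtain rfl : d = d' := g.down.down
        rw [Subsingleton.elim g (𝟙 _)]
        simp [PosFunctor.discrete] }
  exact ⟨h, fun i => hh ⟨i⟩ .unit⟩

theorem exists_weakInserter (hC : WeaklyLex C) {X Y : C} (f g : X ⟶ Y) :
    ∃ (I : C) (e : I ⟶ X), IsWeakInserter f g e := by
  obtain ⟨L, c, hL⟩ := hC WalkingParallelPair .inserter (.parallelPair f g)
    ⟨inferInstance, fun _ _ => inferInstance, fun
      | .zero => inferInstanceAs (Finite PUnit)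
      | .one => inferInstanceAs (Finite Bool)⟩
  have hf : c.app .zero .unit ≫ f = c.app .one false :=
    c.naturality WalkingParallelPairHom.left .unit
  have hg : c.app .zero .unit ≫ g = c.app .one true :=
    c.naturality WalkingParallelPairHom.right .unit
  refine ⟨L, c.app .zero .unit, ?_, fun {Z} h hh => ?_⟩
  · have hle := c.monotone .one false true (Bool.false_le _)
    rw [← hf, ← hg] at hle
    exact hle
  obtain ⟨u, hu⟩ := hL Z
    { app
        | .zero => fun _ => h
        | .one => fun b => bif b then h ≫ g else h ≫ f
      monotone := by
        rintro (_ | _) x y hxy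
        · exact le_rfl
        · cases x <;> cases y
          · exact le_rfl
          · exact hh
          · exact absurd (show true ≤ false from hxy) (by decide)
          · exact le_rfl
      naturality := by
        rintro _ _ u x
        change WalkingParallelPairHom _ _ at u
        cases u with
        | left | right => rfl
        | id => exact Category.comp_id _ }
  exact ⟨u, hu .zero .unit⟩

theorem exists_weakEqualizer (hC : WeaklyLex C) {X Y : C} (f g : X ⟶ Y) :
    ∃ (E : C) (e : E ⟶ X), e ≫ f = e ≫ g ∧
      ∀ {Z : C} (h : Z ⟶ X), h ≫ f = h ≫ g → ∃ u : Z ⟶ E, u ≫ e = h := by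
  obtain ⟨I, i, hfg, hi⟩ := exists_weakInserter hC f g
  obtain ⟨J, j, hgf, hj⟩ := exists_weakInserter hC (i ≫ g) (i ≫ f)
  refine ⟨J, j ≫ i, le_antisymm (by simpa using comp_mono' (le_refl j) hfg) (by simpa using hgf),
    fun {Z} h hh => ?_⟩
  obtain ⟨u, rfl⟩ := hi h hh.le
  obtain ⟨w, rfl⟩ := hj u (by simpa using hh.ge)
  exact ⟨w, (Category.assoc _ _ _).symm⟩

theorem exists_weakMultiequalizer (hC : WeaklyLex C) {κ : Type} {P : C} {V : κ → C}
    (u v : ∀ k, P ⟶ V k) (l : List κ) :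
    ∃ (E : C) (e : E ⟶ P), (∀ k ∈ l, e ≫ u k = e ≫ v k) ∧
      ∀ {Z : C} (h : Z ⟶ P), (∀ k ∈ l, h ≫ u k = h ≫ v k) → ∃ w : Z ⟶ E, w ≫ e = h := by
  induction l with
  | nil => exact ⟨P, 𝟙 P, by simp, fun h _ => ⟨h, by simp⟩⟩
  | cons k l ih =>
    obtain ⟨E, e, he, hE⟩ := ih
    obtain ⟨E', e', he', hE'⟩ := exists_weakEqualizer hC (e ≫ u k) (e ≫ v k)
    refine ⟨E', e' ≫ e, ?_, fun {Z} h hh => ?_⟩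
    · simp only [List.forall_mem_cons, Category.assoc]
      exact ⟨by simpa using he', fun k' hk' => by rw [he k' hk']⟩
    · rw [List.forall_mem_cons] at hh
      obtain ⟨w, rfl⟩ := hE h hh.2
      obtain ⟨w', rfl⟩ := hE' w (by simpa using hh.1)
      exact ⟨w', (Category.assoc _ _ _).symm⟩

theorem exists_weakLimit_equations (hC : WeaklyLex C) {ι κ : Type} [Finite ι] [Finite κ]
    (A : ι → C) (V : κ → C) (s t : κ → ι) (g : ∀ k, A (s k) ⟶ V k) (h : ∀ k, A (t k) ⟶ V k) :
    ∃ (L : C) (l : ∀ i, L ⟶ A i), ∀ {Z : C} (z : ∀ i, Z ⟶ A i),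
      (∀ k, z (s k) ≫ g k = z (t k) ≫ h k) ↔ ∃ u : Z ⟶ L, ∀ i, u ≫ l i = z i := by
  have := Fintype.ofFinite κ
  obtain ⟨P, p, hP⟩ := exists_weakProd hC ι A
  obtain ⟨L, e, he, hL⟩ := exists_weakMultiequalizer hC (fun k => p (s k) ≫ g k)
    (fun k => p (t k) ≫ h k) Finset.univ.toList
  refine ⟨L, fun i => e ≫ p i, fun {Z} z => ⟨fun hz => ?_, ?_⟩⟩
  · obtain ⟨w, hw⟩ := hP z
    obtain ⟨u, rfl⟩ := hL w fun k _ => by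
      rw [← Category.assoc, hw, ← Category.assoc, hw]
      exact hz k
    exact ⟨u, fun i => by rw [← hw, Category.assoc]⟩
  · rintro ⟨u, hu⟩ k
    simp only [← hu, Category.assoc, he k (Finset.mem_toList.2 (Finset.mem_univ k))]

theorem nonempty_arrowObject (hC : WeaklyLex C) (X : C) : Nonempty (ArrowObject X) := by
  obtain ⟨P, p, hP⟩ := exists_weakProd hC Bool fun _ => X
  obtain ⟨I, i, hle, hI⟩ := exists_weakInserter hC (p false) (p true)
  refine ⟨⟨I, i ≫ p false, i ≫ p true, by simpa using hle, fun {A} a0 a1 h => ?_⟩⟩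
  obtain ⟨w, hw⟩ := hP fun b => bif b then a1 else a0
  obtain ⟨u, rfl⟩ := hI w (by simpa [hw] using h)
  exact ⟨u, by simpa using hw false, by simpa using hw true⟩

end WeaklyLex

namespace PosEnr

variable {C : Type u} [Category.{v} C] [PosEnriched C]

theorem OrderMono.eq_of_comp_eq {X Y Z : C} {m : X ⟶ Y} (hm : OrderMono m) {u v : Z ⟶ X}
    (h : u ≫ m = v ≫ m) : u = v :=
  le_antisymm (hm u v h.le) (hm v u h.ge)

theorem IsSo.of_comp {A' A B : C} {s : A' ⟶ A} {e : A ⟶ B} (hse : IsSo (s ≫ e)) : IsSo e := by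
  intro X Y m hm
  refine ⟨fun f g hfg => ?_, fun h h' hle hm' => (hse m hm).2 h h' ?_ hm'⟩
  · obtain ⟨h, -, hhm⟩ := (hse m hm).1 (s ≫ f) g (by simp [hfg])
    exact ⟨h, hm.eq_of_comp_eq (by simp [hhm, hfg]), hhm⟩
  · simpa using comp_mono' (le_refl s) hle

end PosEnr

structure WeakRep {C : Type u} [Category.{v} C] (X : C)
    (ρ : ∀ Z : C, (Z ⟶ X) → (Z ⟶ X) → Prop) where
  R : C
  r0 : R ⟶ X
  r1 : R ⟶ X
  iff : ∀ {Z : C} (a0 a1 : Z ⟶ X), ρ Z a0 a1 ↔ ∃ u : Z ⟶ R, u ≫ r0 = a0 ∧ u ≫ r1 = a1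

namespace ExObj

variable {C : Type u} [Category.{v} C] [PosEnriched C]

def Rel (B : ExObj C) {Z : C} (a0 a1 : Z ⟶ B.X) : Prop :=
  ∃ s : Z ⟶ B.R, s ≫ B.r0 = a0 ∧ s ≫ B.r1 = a1

theorem Rel.of_le {B : ExObj C} {Z : C} {a0 a1 : Z ⟶ B.X} (h : a0 ≤ a1) : Rel B a0 a1 :=
  B.orefl a0 a1 h

theorem Rel.trans {B : ExObj C} {Z : C} {a b c : Z ⟶ B.X} (h1 : Rel B a b) (h2 : Rel B b c) :
    Rel B a c := by
  obtain ⟨s, rfl, hs1⟩ := h1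
  obtain ⟨t, ht0, rfl⟩ := h2
  obtain ⟨w, hw0, hw1⟩ := B.tra s t (hs1.trans ht0.symm)
  exact ⟨w, hw0, hw1⟩

theorem Rel.comp_left {B : ExObj C} {Z Z' : C} (h : Z' ⟶ Z) {a0 a1 : Z ⟶ B.X}
    (hr : Rel B a0 a1) : Rel B (h ≫ a0) (h ≫ a1) := by
  obtain ⟨s, rfl, rfl⟩ := hr
  exact ⟨h ≫ s, by simp, by simp⟩

theorem compat_iff_rel {A B : ExObj C} {f : A.X ⟶ B.X} :
    Compat A B f ↔ Rel B (A.r0 ≫ f) (A.r1 ≫ f) := Iff.rfl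

theorem Compat.of_rel {A B : ExObj C} {f γ : A.X ⟶ B.X} (hγ : Compat A B γ) (h : Rel B f γ)
    (h' : Rel B γ f) : Compat A B f :=
  ((h.comp_left A.r0).trans hγ).trans (h'.comp_left A.r1)

section homMk

def homMk {A B : ExObj C} (f : A.X ⟶ B.X) (hf : Compat A B f) : A ⟶ B :=
  Quotient.mk _ ⟨f, hf⟩

noncomputable def homRep {A B : ExObj C} (φ : A ⟶ B) : A.X ⟶ B.X := φ.out.1

variable {A B D : ExObj C} {f g : A.X ⟶ B.X} {hf : Compat A B f} {hg : Compat A B g}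

theorem homMk_comp (h : B.X ⟶ D.X) (hh : Compat B D h) :
    homMk f hf ≫ homMk h hh = homMk (f ≫ h) (hf.comp hh) := rfl

theorem homMk_le_homMk_iff : homMk f hf ≤ homMk g hg ↔ Rel B f g := Iff.rfl

theorem homMk_eq_homMk_iff : homMk f hf = homMk g hg ↔ Rel B f g ∧ Rel B g f :=
  ⟨Quotient.exact, fun h => Quotient.sound h⟩

theorem homMk_congr (h : f = g) : homMk f hf = homMk g hg := by
  subst h; rfl

theorem compat_homRep (φ : A ⟶ B) : Compat A B (homRep φ) := φ.out.2

@[simp]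
theorem homMk_homRep (φ : A ⟶ B) : homMk (homRep φ) (compat_homRep φ) = φ :=
  Quotient.out_eq φ

theorem exists_eq_homMk (φ : A ⟶ B) : ∃ (f : A.X ⟶ B.X) (hf : Compat A B f), φ = homMk f hf :=
  ⟨homRep φ, compat_homRep φ, (homMk_homRep φ).symm⟩

end homMk

abbrev _root_.WeakRep.toExObj {X : C} {ρ : ∀ Z : C, (Z ⟶ X) → (Z ⟶ X) → Prop} (w : WeakRep X ρ)
    (le : ∀ {Z : C} {a0 a1 : Z ⟶ X}, a0 ≤ a1 → ρ Z a0 a1)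
    (trans : ∀ {Z : C} {a b c : Z ⟶ X}, ρ Z a b → ρ Z b c → ρ Z a c) : ExObj C where
  X := X
  R := w.R
  r0 := w.r0
  r1 := w.r1
  orefl a0 a1 h := (w.iff a0 a1).1 (le h)
  tra u v huv := (w.iff _ _).1 <| trans ((w.iff _ _).2 ⟨u, rfl, rfl⟩)
    (huv ▸ (w.iff _ _).2 ⟨v, rfl, rfl⟩)

theorem _root_.WeakRep.rel_toExObj_iff {X : C} {ρ : ∀ Z : C, (Z ⟶ X) → (Z ⟶ X) → Prop}
    (w : WeakRep X ρ) {le trans} {Z : C} {a0 a1 : Z ⟶ X} :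
    Rel (w.toExObj le trans) a0 a1 ↔ ρ Z a0 a1 :=
  (w.iff a0 a1).symm

structure RelConstraint {ι : Type*} (A : ι → C) where
  B : ExObj C
  s : ι
  t : ι
  g : A s ⟶ B.X
  h : A t ⟶ B.X

def RelConstraint.Holds {ι : Type*} {A : ι → C} (c : RelConstraint A) {Z : C}
    (z : ∀ i, Z ⟶ A i) : Prop :=
  Rel c.B (z c.s ≫ c.g) (z c.t ≫ c.h)

theorem _root_.WeaklyLex.exists_weakLimit_relConstraints (hC : WeaklyLex C) {ι κ : Type}
    [Finite ι] [Finite κ] {A : ι → C} (c : κ → RelConstraint A) :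
    ∃ (L : C) (l : ∀ i, L ⟶ A i), ∀ {Z : C} (z : ∀ i, Z ⟶ A i),
      (∀ k, (c k).Holds z) ↔ ∃ u : Z ⟶ L, ∀ i, u ≫ l i = z i := by
  obtain ⟨L, l, hL⟩ := hC.exists_weakLimit_equations (ι := ι ⊕ κ) (κ := κ ⊕ κ)
    (Sum.elim A fun k => (c k).B.R) (Sum.elim (fun k => (c k).B.X) fun k => (c k).B.X)
    (Sum.elim Sum.inr Sum.inr) (Sum.elim (fun k => .inl (c k).s) fun k => .inl (c k).t)
    (fun | .inl k => (c k).B.r0 | .inr k => (c k).B.r1)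
    (fun | .inl k => (c k).g | .inr k => (c k).h)
  refine ⟨L, fun i => l (.inl i), fun {Z} z => ⟨fun hz => ?_, fun ⟨u, hu⟩ k => ?_⟩⟩
  · choose r hr0 hr1 using hz
    obtain ⟨u, hu⟩ := (hL fun | .inl i => z i | .inr k => r k).1 fun
      | .inl k => hr0 k
      | .inr k => hr1 k
    exact ⟨u, fun i => hu (.inl i)⟩
  · have hl := (hL fun i => u ≫ l i).2 ⟨u, fun _ => rfl⟩
    refine ⟨u ≫ l (.inr k), ?_, ?_⟩
    · simpa [← hu] using hl (.inl k)
    · simpa [← hu] using hl (.inr k)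

section induced

variable {ι : Type} {X : C} (B : ι → ExObj C) (f : ∀ i, X ⟶ (B i).X)

abbrev inducedRel : ∀ Z : C, (Z ⟶ X) → (Z ⟶ X) → Prop :=
  fun _ a0 a1 => ∀ i, Rel (B i) (a0 ≫ f i) (a1 ≫ f i)

theorem _root_.WeaklyLex.nonempty_weakRep_inducedRel (hC : WeaklyLex C) [Finite ι] :
    Nonempty (WeakRep X (inducedRel B f)) := by
  obtain ⟨L, l, hL⟩ := hC.exists_weakLimit_relConstraints fun i : ι =>
    (⟨B i, false, true, f i, f i⟩ : RelConstraint fun _ : Bool => X)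
  refine ⟨⟨L, l false, l true, fun {Z} a0 a1 => ?_⟩⟩
  simpa [inducedRel, Bool.forall_bool, RelConstraint.Holds, and_comm] using
    hL fun b => bif b then a1 else a0

variable {B f}

abbrev induced (w : WeakRep X (inducedRel B f)) : ExObj C :=
  w.toExObj (fun h _ => Rel.of_le (comp_mono' h le_rfl)) fun h h' i => (h i).trans (h' i)

variable (w : WeakRep X (inducedRel B f))

theorem rel_induced_iff {Z : C} {a0 a1 : Z ⟶ X} :
    Rel (induced w) a0 a1 ↔ ∀ i, Rel (B i) (a0 ≫ f i) (a1 ≫ f i) :=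
  w.rel_toExObj_iff

theorem compat_induced (i : ι) : Compat (induced w) (B i) (f i) :=
  (rel_induced_iff w).1 ⟨𝟙 _, Category.id_comp _, Category.id_comp _⟩ i

theorem compat_to_induced {A : ExObj C} {g : A.X ⟶ X} (hg : ∀ i, Compat A (B i) (g ≫ f i)) :
    Compat A (induced w) g :=
  (rel_induced_iff w).2 fun i => by simpa only [Category.assoc] using compat_iff_rel.1 (hg i)

theorem le_of_forall_comp_homMk_le {A : ExObj C} {u v : A ⟶ induced w}
    (h : ∀ i, u ≫ homMk (f i) (compat_induced w i) ≤ v ≫ homMk (f i) (compat_induced w i)) :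
    u ≤ v := by
  obtain ⟨a, ha, rfl⟩ := exists_eq_homMk u
  obtain ⟨b, hb, rfl⟩ := exists_eq_homMk v
  exact (rel_induced_iff w).2 h

end induced

section limits

variable {D : Type} [SmallCategory D] [PosEnriched D] (W : PosWeight D)
  (F : PosFunctor D (ExObj C))

abbrev CylinderConstraintIdx : Type :=
  {p : Σ d, W.obj d × W.obj d // p.2.1 ≤ p.2.2} ⊕
    (Σ d d', (d ⟶ d') × W.obj d) ⊕ (Σ d d', (d ⟶ d') × W.obj d)

/-- The conditions for `⟨d, x⟩ ↦ [z ⟨d, x⟩]` to be monotone in `x` and natural in `d`. -/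
noncomputable def cylinderConstraint :
    CylinderConstraintIdx W → RelConstraint fun p : Σ d, W.obj d => (F.toFunctor.obj p.1).X
  | .inl ⟨⟨d, x, y⟩, _⟩ => ⟨F.toFunctor.obj d, ⟨d, x⟩, ⟨d, y⟩, 𝟙 _, 𝟙 _⟩
  | .inr (.inl ⟨d, d', f, x⟩) =>
    ⟨F.toFunctor.obj d', ⟨d, x⟩, ⟨d', W.map f x⟩, homRep (F.toFunctor.map f), 𝟙 _⟩
  | .inr (.inr ⟨d, d', f, x⟩) =>
    ⟨F.toFunctor.obj d', ⟨d', W.map f x⟩, ⟨d, x⟩, 𝟙 _, homRep (F.toFunctor.map f)⟩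

variable {W F} {Z : ExObj C} {z : ∀ p : Σ d, W.obj d, Z.X ⟶ (F.toFunctor.obj p.1).X}
  (hz : ∀ p, Compat Z (F.toFunctor.obj p.1) (z p))

theorem homMk_comp_map_eq_iff {d d' : D} (f : d ⟶ d') (x : W.obj d) :
    homMk (z ⟨d, x⟩) (hz _) ≫ F.toFunctor.map f = homMk (z ⟨d', W.map f x⟩) (hz _) ↔
      (cylinderConstraint W F (.inr (.inl ⟨d, d', f, x⟩))).Holds z ∧
        (cylinderConstraint W F (.inr (.inr ⟨d, d', f, x⟩))).Holds z := by
  rw [← homMk_homRep (F.toFunctor.map f), homMk_comp, homMk_eq_homMk_iff]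
  simp [cylinderConstraint, RelConstraint.Holds]

def cylinderOfHolds (H : ∀ k, (cylinderConstraint W F k).Holds z) : Cylinder W F Z where
  app d x := homMk (z ⟨d, x⟩) (hz ⟨d, x⟩)
  monotone d x y hxy := homMk_le_homMk_iff.2 <| by
    simpa [cylinderConstraint, RelConstraint.Holds] using H (.inl ⟨⟨d, x, y⟩, hxy⟩)
  naturality f x := (homMk_comp_map_eq_iff hz f x).2 ⟨H _, H _⟩

theorem _root_.Cylinder.holds (φ : Cylinder W F Z)
    (hφ : ∀ d x, φ.app d x = homMk (z ⟨d, x⟩) (hz ⟨d, x⟩)) :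
    ∀ k, (cylinderConstraint W F k).Holds z
  | .inl ⟨⟨d, x, y⟩, hxy⟩ => by
    have hle := φ.monotone d x y hxy
    rw [hφ, hφ, homMk_le_homMk_iff] at hle
    simpa [cylinderConstraint, RelConstraint.Holds] using hle
  | .inr (.inl ⟨_, _, f, x⟩) =>
    ((homMk_comp_map_eq_iff hz f x).1 (by simpa [hφ] using φ.naturality f x)).1
  | .inr (.inr ⟨_, _, f, x⟩) =>
    ((homMk_comp_map_eq_iff hz f x).1 (by simpa [hφ] using φ.naturality f x)).2

end limits

theorem hasFiniteWeightedLimitsP (hC : WeaklyLex C) : HasFiniteWeightedLimitsP (ExObj C) := by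
  rintro D _ _ W F ⟨_, _, _⟩
  obtain ⟨L, l, hL⟩ := hC.exists_weakLimit_relConstraints (cylinderConstraint W F)
  obtain ⟨w⟩ := hC.nonempty_weakRep_inducedRel (fun p : Σ d, W.obj d => F.toFunctor.obj p.1) l
  have hl : ∀ k, (cylinderConstraint W F k).Holds l :=
    (hL l).2 ⟨𝟙 L, fun _ => Category.id_comp _⟩
  refine ⟨induced w, cylinderOfHolds (compat_induced w) hl, fun Z φ => ?_,
    fun Z h h' hle => le_of_forall_comp_homMk_le w fun p => hle p.1 p.2⟩
  choose z hz hφ using fun p : Σ d, W.obj d => exists_eq_homMk (φ.app p.1 p.2)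
  obtain ⟨u, hu⟩ := (hL z).1 (φ.holds hz fun d x => hφ ⟨d, x⟩)
  refine ⟨homMk u (compat_to_induced w fun p => (hu p).symm ▸ hz p), fun d x => ?_⟩
  rw [hφ ⟨d, x⟩]
  exact homMk_congr (hu ⟨d, x⟩)

section gamma

abbrev _root_.ArrowObject.toExObj {X : C} (a : ArrowObject X) : ExObj C where
  X := X
  R := a.I
  r0 := a.i0
  r1 := a.i1
  orefl := a.lift
  tra _ _ huv := a.lift _ _ <|
    (comp_mono' le_rfl a.le).trans (huv.le.trans (comp_mono' le_rfl a.le))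

/-- The object `Γ Y` of the paper. It is an `abbrev` of a structure literal, not
`commaExObj I i0 i1 hle hfac Y`, so that `(Γ Y).X` unfolds to `Y` during unification. -/
noncomputable abbrev gamma (hC : WeaklyLex C) (Y : C) : ExObj C :=
  (Classical.choice (hC.nonempty_arrowObject Y)).toExObj

variable {hC : WeaklyLex C}

local notation "Γ" => gamma hC

theorem compat_gamma {Y : C} {B : ExObj C} (f : Y ⟶ B.X) : Compat (Γ Y) B f :=
  Rel.of_le (comp_mono' (ArrowObject.le _) le_rfl)

variable (hC) in
noncomputable def gammaQuot (B : ExObj C) : Γ B.X ⟶ B :=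
  homMk (𝟙 B.X) (compat_gamma _)

local notation "q" => gammaQuot hC

theorem exists_eq_homMk_gamma {Y : C} {U : ExObj C} (y : Γ Y ⟶ U) :
    ∃ x : Y ⟶ U.X, y = homMk x (compat_gamma x) :=
  let ⟨x, _, hy⟩ := exists_eq_homMk y
  ⟨x, hy⟩

theorem homMk_gamma_comp {Y : C} {U W : ExObj C} (a : Y ⟶ U.X) (μ : U.X ⟶ W.X)
    (hμ : Compat U W μ) :
    (homMk a (compat_gamma a) : Γ Y ⟶ U) ≫ homMk μ hμ = homMk (a ≫ μ) (compat_gamma _) := rfl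

theorem homMk_gamma_le_iff {Y : C} {U : ExObj C} {a b : Y ⟶ U.X} :
    (homMk a (compat_gamma a) : Γ Y ⟶ U) ≤ homMk b (compat_gamma b) ↔ Rel U a b := Iff.rfl

theorem homMk_gamma_eq_iff {Y : C} {U : ExObj C} {a b : Y ⟶ U.X} :
    (homMk a (compat_gamma a) : Γ Y ⟶ U) = homMk b (compat_gamma b) ↔ Rel U a b ∧ Rel U b a :=
  homMk_eq_homMk_iff

theorem gammaQuot_comp_homMk {B W : ExObj C} (γ : B.X ⟶ W.X) (hγ : Compat B W γ) :
    q B ≫ homMk γ hγ = (homMk γ (compat_gamma γ) : Γ B.X ⟶ W) :=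
  homMk_congr (Category.id_comp γ)

theorem gammaQuot_comp_le_gammaQuot_comp_iff {B U : ExObj C} {h h' : B ⟶ U} :
    q B ≫ h ≤ q B ≫ h' ↔ h ≤ h' := by
  obtain ⟨x, hx, rfl⟩ := exists_eq_homMk h
  obtain ⟨x', hx', rfl⟩ := exists_eq_homMk h'
  rw [gammaQuot_comp_homMk, gammaQuot_comp_homMk, homMk_gamma_le_iff, homMk_le_homMk_iff]

theorem gammaQuot_comp_injective {B U : ExObj C} {h h' : B ⟶ U} (e : q B ≫ h = q B ≫ h') :
    h = h' :=
  le_antisymm (gammaQuot_comp_le_gammaQuot_comp_iff.1 e.le)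
    (gammaQuot_comp_le_gammaQuot_comp_iff.1 e.ge)

/-- The lift is `[x]` for the representative `x` of `y`. It is compatible because the
order-monicity of `(m0, m1)` can be tested on the elements `[B.r0 ≫ x]`, `[B.r1 ≫ x]` over
`Γ B.R`. -/
theorem exists_gammaQuot_comp_eq {B U W0 W1 : ExObj C} {m0 : U ⟶ W0} {m1 : U ⟶ W1}
    (hm : ∀ {Z : ExObj C} (u v : Z ⟶ U), u ≫ m0 ≤ v ≫ m0 → u ≫ m1 ≤ v ≫ m1 → u ≤ v)
    (y : Γ B.X ⟶ U) {c0 : B ⟶ W0} {c1 : B ⟶ W1} (h0 : y ≫ m0 = q B ≫ c0)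
    (h1 : y ≫ m1 = q B ≫ c1) : ∃ h : B ⟶ U, q B ≫ h = y := by
  obtain ⟨x, rfl⟩ := exists_eq_homMk_gamma y
  have test {W : ExObj C} {m : U ⟶ W} {c : B ⟶ W}
      (h : (homMk x (compat_gamma x) : Γ B.X ⟶ U) ≫ m = q B ≫ c) :
      (homMk (B.r0 ≫ x) (compat_gamma _) : Γ B.R ⟶ U) ≫ m ≤
        homMk (B.r1 ≫ x) (compat_gamma _) ≫ m := by
    obtain ⟨μ, hμ, rfl⟩ := exists_eq_homMk m
    obtain ⟨γ, hγ, rfl⟩ := exists_eq_homMk c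
    rw [gammaQuot_comp_homMk, homMk_gamma_comp, homMk_gamma_eq_iff] at h
    rw [homMk_gamma_comp, homMk_gamma_comp, homMk_gamma_le_iff]
    simpa using compat_iff_rel.1 (hγ.of_rel h.1 h.2)
  exact ⟨homMk x (hm _ _ (test h0) (test h1)), homMk_congr (Category.id_comp x)⟩

theorem isSo_gammaQuot (B : ExObj C) : IsSo (q B) := by
  intro U W m hm
  refine ⟨fun y c hyc => ?_, fun h h' hle _ => gammaQuot_comp_le_gammaQuot_comp_iff.1 hle⟩
  obtain ⟨h, rfl⟩ := exists_gammaQuot_comp_eq (fun u v hu _ => hm u v hu) y hyc hyc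
  exact ⟨h, rfl, gammaQuot_comp_injective (by simpa using hyc)⟩

theorem isSo_of_comp_eq_gammaQuot {A B : ExObj C} {φ : A ⟶ B} {s : Γ B.X ⟶ A}
    (h : s ≫ φ = q B) : IsSo φ :=
  IsSo.of_comp (h ▸ isSo_gammaQuot B)

section kernel

variable {A B : ExObj C} {f : A.X ⟶ B.X}
  (w : WeakRep A.X (inducedRel (fun _ : Unit => B) fun _ => f))

theorem compat_id_induced (hf : Compat A B f) : Compat A (induced w) (𝟙 A.X) :=
  compat_to_induced w fun _ => by simpa using hf

theorem orderMono_homMk_induced : OrderMono (homMk (A := induced w) f (compat_induced w ())) :=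
  fun _ _ h => le_of_forall_comp_homMk_le w fun _ => h

end kernel

theorem exists_isSo_orderMono_factorization (hC : WeaklyLex C) {A B : ExObj C} (φ : A ⟶ B) :
    ∃ (K : ExObj C) (e : A ⟶ K) (m : K ⟶ B), IsSo e ∧ OrderMono m ∧ e ≫ m = φ := by
  obtain ⟨f, hf, rfl⟩ := exists_eq_homMk φ
  obtain ⟨w⟩ := hC.nonempty_weakRep_inducedRel (fun _ : Unit => B) fun _ => f
  have he : gammaQuot hC A ≫ (homMk (𝟙 A.X) (compat_id_induced w hf) : A ⟶ induced w) =
      gammaQuot hC (induced w) :=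
    homMk_congr (Category.comp_id _)
  exact ⟨induced w, _, _, isSo_of_comp_eq_gammaQuot he, orderMono_homMk_induced w,
    homMk_congr (Category.id_comp f)⟩

theorem isSo_iff_exists_comp_eq_gammaQuot {A B : ExObj C} (φ : A ⟶ B) :
    IsSo φ ↔ ∃ s : Γ B.X ⟶ A, s ≫ φ = q B := by
  refine ⟨fun hφ => ?_, fun ⟨s, hs⟩ => isSo_of_comp_eq_gammaQuot hs⟩
  obtain ⟨f, hf, rfl⟩ := exists_eq_homMk φ
  obtain ⟨w⟩ := hC.nonempty_weakRep_inducedRel (fun _ : Unit => B) fun _ => f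
  obtain ⟨h, -, hh⟩ := (hφ _ (orderMono_homMk_induced w)).1
    (homMk (B := induced w) (𝟙 A.X) (compat_id_induced w hf)) (𝟙 B) (homMk_congr (by simp))
  obtain ⟨t, ht⟩ := exists_eq_homMk_gamma (q B ≫ h)
  refine ⟨homMk t (compat_gamma (B := A) t), ?_⟩
  calc (homMk t (compat_gamma (B := A) t) : Γ B.X ⟶ A) ≫ homMk f hf
        = (q B ≫ h) ≫ homMk (A := induced w) f (compat_induced w ()) := by
        rw [ht]; rfl
    _ = q B := by rw [Category.assoc, hh, Category.comp_id]

theorem exists_gammaQuot_comp_eq_comp {A B : ExObj C} (g : A ⟶ B) :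
    ∃ t : Γ A.X ⟶ Γ B.X, t ≫ q B = q A ≫ g := by
  obtain ⟨γ, hγ, rfl⟩ := exists_eq_homMk g
  exact ⟨homMk γ (compat_gamma (B := Γ B.X) γ), homMk_congr (by simp)⟩

theorem isSo_snd_of_isPullbackP (hC : WeaklyLex C) {A B D P : ExObj C} {f : A ⟶ D} {g : B ⟶ D}
    {p0 : P ⟶ A} {p1 : P ⟶ B} (hpb : IsPullbackP f g p0 p1) (hf : IsSo f) : IsSo p1 := by
  obtain ⟨s, hs⟩ := (isSo_iff_exists_comp_eq_gammaQuot (hC := hC) f).1 hf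
  obtain ⟨t, ht⟩ := exists_gammaQuot_comp_eq_comp (hC := hC) g
  obtain ⟨u, -, hu⟩ := hpb.2.1 (t ≫ s) (gammaQuot hC B) (by rw [Category.assoc, hs, ht])
  exact isSo_of_comp_eq_gammaQuot hu

section congruence

variable {S X : ExObj C}

variable (hC) in
def congRel (s0 s1 : S ⟶ X) : ∀ Z : C, (Z ⟶ X.X) → (Z ⟶ X.X) → Prop :=
  fun Z a0 a1 => ∃ w : Γ Z ⟶ S,
    w ≫ s0 = homMk a0 (compat_gamma a0) ∧ w ≫ s1 = homMk a1 (compat_gamma a1)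

variable {s0 s1 : S ⟶ X} {Z : C}

theorem congRel_of_rel (hs : IsCongPair s0 s1) {a0 a1 : Z ⟶ X.X} (h : Rel X a0 a1) :
    congRel hC s0 s1 Z a0 a1 :=
  hs.2.1 _ _ (homMk_gamma_le_iff.2 h)

theorem congRel_trans (hs : IsCongPair s0 s1) {a b c : Z ⟶ X.X}
    (hab : congRel hC s0 s1 Z a b) (hbc : congRel hC s0 s1 Z b c) : congRel hC s0 s1 Z a c := by
  obtain ⟨u, hu0, hu1⟩ := hab
  obtain ⟨v, hv0, hv1⟩ := hbc
  obtain ⟨t, ht0, ht1⟩ := hs.2.2 u v (hu1.trans hv0.symm)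
  exact ⟨t, ht0.trans hu0, ht1.trans hv1⟩

theorem congRel_iff {σ0 σ1 : S.X ⟶ X.X} {hσ0 : Compat S X σ0} {hσ1 : Compat S X σ1}
    (hs : IsCongPair (homMk σ0 hσ0) (homMk σ1 hσ1)) {a0 a1 : Z ⟶ X.X} :
    congRel hC (homMk σ0 hσ0) (homMk σ1 hσ1) Z a0 a1 ↔
      ∃ x : Z ⟶ S.X, Rel X a0 (x ≫ σ0) ∧ Rel X (x ≫ σ1) a1 := by
  refine ⟨fun ⟨w, hw0, hw1⟩ => ?_, fun ⟨x, h0, h1⟩ => ?_⟩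
  · obtain ⟨x, rfl⟩ := exists_eq_homMk_gamma w
    rw [homMk_gamma_comp, homMk_gamma_eq_iff] at hw0 hw1
    exact ⟨x, hw0.2, hw1.1⟩
  · exact congRel_trans hs (congRel_of_rel hs h0)
      (congRel_trans hs ⟨homMk x (compat_gamma x), rfl, rfl⟩ (congRel_of_rel hs h1))

theorem nonempty_weakRep_congRel (hC : WeaklyLex C) {σ0 σ1 : S.X ⟶ X.X}
    {hσ0 : Compat S X σ0} {hσ1 : Compat S X σ1} (hs : IsCongPair (homMk σ0 hσ0) (homMk σ1 hσ1)) :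
    Nonempty (WeakRep X.X (congRel hC (homMk σ0 hσ0) (homMk σ1 hσ1))) := by
  obtain ⟨L, l, hL⟩ := hC.exists_weakLimit_relConstraints (A := fun i : Option Bool =>
    i.elim S.X fun _ => X.X) fun b : Bool =>
      bif b then ⟨X, none, some true, σ1, 𝟙 _⟩ else ⟨X, some false, none, 𝟙 _, σ0⟩
  refine ⟨⟨L, l (some false), l (some true), fun {Z} a0 a1 => ?_⟩⟩
  rw [congRel_iff hs]
  constructor
  · rintro ⟨x, h0, h1⟩
    obtain ⟨u, hu⟩ := (hL fun | none => x | some b => bif b then a1 else a0).1 <|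
      Bool.forall_bool.2 ⟨by simpa [RelConstraint.Holds] using h0,
        by simpa [RelConstraint.Holds] using h1⟩
    exact ⟨u, hu (some false), hu (some true)⟩
  · rintro ⟨u, rfl, rfl⟩
    have hu := (hL fun i => u ≫ l i).2 ⟨u, fun _ => rfl⟩
    exact ⟨u ≫ l none, by simpa [RelConstraint.Holds] using hu false,
      by simpa [RelConstraint.Holds] using hu true⟩

end congruence

theorem exists_isCommaP_of_isCongPair (hC : WeaklyLex C) {S X : ExObj C} {s0 s1 : S ⟶ X}
    (hs : IsCongPair s0 s1) : ∃ (Q : ExObj C) (p : X ⟶ Q), IsCommaP p p s0 s1 := by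
  obtain ⟨σ0, hσ0, rfl⟩ := exists_eq_homMk s0
  obtain ⟨σ1, hσ1, rfl⟩ := exists_eq_homMk s1
  obtain ⟨w⟩ := nonempty_weakRep_congRel hC hs
  let Q := w.toExObj (fun h => congRel_of_rel hs (.of_le h)) (congRel_trans hs)
  have hp : Compat X Q (𝟙 X.X) :=
    w.rel_toExObj_iff.2 <| congRel_of_rel hs ⟨𝟙 _, by simp, by simp⟩
  refine ⟨Q, homMk (𝟙 X.X) hp, ?_, fun {A} u0 u1 hu => ?_, hs.1⟩
  · have h : congRel hC (homMk σ0 hσ0) (homMk σ1 hσ1) S.X (𝟙 S.X ≫ σ0) (𝟙 S.X ≫ σ1) :=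
      ⟨homMk (𝟙 S.X) (compat_gamma _), rfl, rfl⟩
    exact w.rel_toExObj_iff.2 (by simpa using h)
  obtain ⟨a0, ha0, rfl⟩ := exists_eq_homMk u0
  obtain ⟨a1, ha1, rfl⟩ := exists_eq_homMk u1
  rw [homMk_comp, homMk_comp, homMk_le_homMk_iff, w.rel_toExObj_iff] at hu
  obtain ⟨v, hv0, hv1⟩ := hu
  simp only [Category.comp_id] at hv0 hv1
  rw [← gammaQuot_comp_homMk a0 ha0] at hv0
  rw [← gammaQuot_comp_homMk a1 ha1] at hv1
  obtain ⟨h, rfl⟩ := exists_gammaQuot_comp_eq hs.1 v hv0 hv1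
  exact ⟨h, gammaQuot_comp_injective (by simpa using hv0),
    gammaQuot_comp_injective (by simpa using hv1)⟩

end gamma

end ExObj

/-- the exact completion of a weakly lex `Pos`-category is an exact
`Pos`-enriched category. -/
theorem statement10 {C : Type u} [Category.{v} C] [PosEnriched C] (hC : WeaklyLex C) :
    IsExactCat (ExObj C) :=
  ⟨⟨ExObj.hasFiniteWeightedLimitsP hC, ExObj.exists_isSo_orderMono_factorization hC,
      fun _ _ _ _ hpb hf => ExObj.isSo_snd_of_isPullbackP hC hpb hf⟩,
    fun _ _ hs => ExObj.exists_isCommaP_of_isCongPair hC hs⟩
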